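/- Let κ be a power of 2 and let C_S, C_T be legal configurations for capacity κ with |C_S| = |C_T| and U(C_S) = U(C_T), such that every item of U(C_S) is a power of 2. Suppose that some item size occurring in C_S is not settled in C_S with respect to C_T, and let ℓ be the largest item size occurring in C_S that is not settled in C_S with respect to C_T. Then C_S is reconfigurable to C_T for capacity κ if and only if the total slack Σ_{B ∈ C_S} slack(B) is at least ℓ. -/

import Mathlib

/-- A bunch is a multiset of items (item = positive integer, encoded as `ℕ`). -/
abbrev Bunch := Multiset ℕ

/-- A configuration is a multiset of bunches. -/
abbrev Config := Multiset Bunch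

/-- The volume of a bunch is the sum of its items. -/
def vol (B : Bunch) : ℕ := B.sum

/-- A configuration is legal for capacity `κ` if every bunch has volume at most `κ`. -/
def Legal (κ : ℕ) (C : Config) : Prop := ∀ B ∈ C, vol B ≤ κ

/-- The total slack of a configuration for capacity `κ`. -/
def slackSum (κ : ℕ) (C : Config) : ℕ := (C.map fun B => κ - vol B).sum

/-- `C'` is obtained from `C` by moving the single item `u` from a donor bunch `Bd`
to a (different occurrence of a) recipient bunch `Br`, respecting the capacity `κ`. -/
def AdjacentVia (κ u : ℕ) (C C' : Config) : Prop :=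
  ∃ (rest : Config) (Bd Br : Bunch),
    u ∈ Bd ∧ vol Br + u ≤ κ ∧
    C = Bd ::ₘ Br ::ₘ rest ∧ C' = Bd.erase u ::ₘ (u ::ₘ Br) ::ₘ rest

/-- Two configurations are adjacent if one is obtained from the other by moving a single item. -/
def Adjacent (κ : ℕ) (C C' : Config) : Prop := ∃ u, AdjacentVia κ u C C'

/-- One step of a reconfiguration sequence: both configurations are legal and adjacent. -/
def Step (κ : ℕ) (C C' : Config) : Prop := Legal κ C ∧ Legal κ C' ∧ Adjacent κ C C'

/-- `CS` is reconfigurable to `CT` for capacity `κ`: there is a sequence of legal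
configurations for capacity `κ` from `CS` to `CT` with consecutive ones adjacent. -/
def Reconfigurable (κ : ℕ) (CS CT : Config) : Prop :=
  Relation.ReflTransGen (Step κ) CS CT

/-- The multiset of items of `B` of size at least `s`. -/
def AtLeast (s : ℕ) (B : Bunch) : Bunch := B.filter (s ≤ ·)

instance (s : ℕ) (B : Multiset ℕ) : Decidable (∃ x ∈ B, s ≤ x) :=
  Multiset.decidableExistsMultiset

/-- The multiset of bunches of `D` containing an item of size at least `s`. -/
def BunchesWith (s : ℕ) (D : Config) : Config :=
  D.filter fun B => ∃ x ∈ B, s ≤ x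

/-- Item size `s` is settled in `D` with respect to `CT`: there is a bijection `φ`
(a multiplicity-respecting pairing) from the multiset of bunches of `D` containing an
item of size at least `s` to the multiset of such bunches of `CT` with
`D_{≥s}(B) = (CT)_{≥s}(φ B)` for every `B` in the domain. -/
def Settled (s : ℕ) (D CT : Config) : Prop :=
  Multiset.Rel (fun B B' => AtLeast s B = AtLeast s B') (BunchesWith s D) (BunchesWith s CT)

/-!
If the total slack is below `ℓ`, no bunch ever has room for an item of size at least `ℓ`, so no
such item ever moves: the profiles `AtLeast ℓ B` of the bunches are invariant and `ℓ` stays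
unsettled.

Conversely, all sizes above `ℓ` are settled, so the `2ℓ`-profiles already agree with `C_T`, and the
sizes `s = ℓ, ℓ/2, …, 1` are settled one after the other. Pair the `s`-profiles of the current
configuration with those of `C_T` so that paired profiles agree on items of size at least `2s`.
Both sides contain equally many items of size `s`, so while the pairs differ there is a pair with a
surplus and a pair with a deficit of them; moving one item of size `s` from the first to the second
lowers the total mismatch. The receiving bunch has room for it once its items smaller than `s` are
moved away, and that only needs moves of items smaller than `s`: with capacity and item sizes
powers of two, the smallest item of a bunch divides its slack, so by induction on `w` a total slack
of at least `w` can be gathered in a single bunch by moving items smaller than `w`.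
-/

theorem Nat.isPowerOfTwo.dvd_of_le {a b : ℕ} (ha : a.isPowerOfTwo) (hb : b.isPowerOfTwo)
    (h : a ≤ b) : a ∣ b := by
  obtain ⟨i, rfl⟩ := ha
  obtain ⟨j, rfl⟩ := hb
  exact pow_dvd_pow 2 ((Nat.pow_le_pow_iff_right (by norm_num)).1 h)

theorem Nat.isPowerOfTwo.eq_of_le_of_lt_two_mul {a b : ℕ} (ha : a.isPowerOfTwo)
    (hb : b.isPowerOfTwo) (h : a ≤ b) (h' : b < 2 * a) : b = a := by
  obtain ⟨k, rfl⟩ := ha.dvd_of_le hb h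
  have ha0 := Nat.pos_of_isPowerOfTwo ha
  rcases k with _ | _ | k
  · omega
  · simp
  · nlinarith

namespace Multiset

theorem Rel.exists_map_fst_map_snd {α β : Type*} {r : α → β → Prop}
    {P : Multiset α} {Q : Multiset β} (h : Rel r P Q) :
    ∃ Z : Multiset (α × β), Z.map Prod.fst = P ∧ Z.map Prod.snd = Q ∧ ∀ p ∈ Z, r p.1 p.2 := by
  induction h with
  | zero => exact ⟨0, by simp⟩
  | @cons a b P Q hab _ ih =>
    obtain ⟨Z, h1, h2, h3⟩ := ih
    exact ⟨(a, b) ::ₘ Z, by simp [h1], by simp [h2], by simpa [hab] using h3⟩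

theorem exists_eq_cons_cons_of_map_eq {α β : Type*} [DecidableEq α] {f : α → β}
    {X : Multiset α} {a b : β} {M : Multiset β} (h : X.map f = a ::ₘ b ::ₘ M) :
    ∃ A B Y, X = A ::ₘ B ::ₘ Y ∧ f A = a ∧ f B = b ∧ Y.map f = M := by
  obtain ⟨A, hA, hfA, h'⟩ := (map_eq_cons f X _ a).2 h
  obtain ⟨B, hB, hfB, hY⟩ := (map_eq_cons f _ _ b).2 h'
  refine ⟨A, B, (X.erase A).erase B, ?_, hfA, hfB, hY⟩
  rw [cons_erase hB, cons_erase hA]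

theorem exists_cons_cons_of_sum_map_eq {α : Type*} [DecidableEq α] {Z : Multiset α}
    {f g : α → ℕ} (hsum : (Z.map f).sum = (Z.map g).sum) (hne : ∃ p ∈ Z, f p ≠ g p) :
    ∃ a b rest, Z = a ::ₘ b ::ₘ rest ∧ g a < f a ∧ f b < g b := by
  obtain ⟨p, hp, hfg⟩ := hne
  have ha : ∃ a ∈ Z, g a < f a := by
    by_contra! h
    have := sum_lt_sum h ⟨p, hp, lt_of_le_of_ne (h p hp) hfg⟩
    omega
  have hb : ∃ b ∈ Z, f b < g b := by
    by_contra! h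
    have := sum_lt_sum h ⟨p, hp, lt_of_le_of_ne (h p hp) (Ne.symm hfg)⟩
    omega
  obtain ⟨a, haZ, ha⟩ := ha
  obtain ⟨b, hbZ, hb⟩ := hb
  have hab : b ≠ a := by rintro rfl; omega
  refine ⟨a, b, (Z.erase a).erase b, ?_, ha, hb⟩
  rw [cons_erase ((mem_erase_of_ne hab).2 hbZ), cons_erase haZ]

theorem eq_of_card_eq_of_filter_ne_eq {α : Type*} [DecidableEq α] {M N : Multiset α}
    {a : α} (hc : card M = card N) (h : M.filter (· ≠ a) = N.filter (· ≠ a)) : M = N := by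
  have hcount : ∀ K : Multiset α, card K = K.count a + card (K.filter (· ≠ a)) := fun K => by
    rw [← card_replicate (K.count a) a, ← filter_eq', ← card_add,
      filter_add_not]
  ext b
  by_cases hb : b = a
  · subst hb
    have hM := hcount M
    rw [h] at hM
    have := hcount N
    omega
  · have := congrArg (count b) h
    rwa [count_filter_of_pos (p := (· ≠ a)) hb,
      count_filter_of_pos (p := (· ≠ a)) hb] at this

end Multiset

theorem vol_add (A B : Bunch) : vol (A + B) = vol A + vol B := Multiset.sum_add A B

theorem vol_cons (a : ℕ) (B : Bunch) : vol (a ::ₘ B) = a + vol B := Multiset.sum_cons a B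

theorem vol_replicate (n a : ℕ) : vol (Multiset.replicate n a) = n * a := by
  simp [vol, Multiset.sum_replicate]

theorem vol_mono {A B : Bunch} (h : A ≤ B) : vol A ≤ vol B := by
  obtain ⟨C, rfl⟩ := Multiset.le_iff_exists_add.1 h
  rw [vol_add]
  omega

theorem le_vol_of_mem {u : ℕ} {B : Bunch} (hu : u ∈ B) : u ≤ vol B :=
  Multiset.le_sum_of_mem hu

theorem vol_erase_add {u : ℕ} {B : Bunch} (hu : u ∈ B) : vol (B.erase u) + u = vol B := by
  conv_rhs => rw [← Multiset.cons_erase hu]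
  rw [vol_cons, add_comm]

theorem vol_atLeast_le (s : ℕ) (B : Bunch) : vol (AtLeast s B) ≤ vol B :=
  vol_mono (Multiset.filter_le _ _)

theorem atLeast_cons_of_lt {s u : ℕ} (h : u < s) (B : Bunch) :
    AtLeast s (u ::ₘ B) = AtLeast s B :=
  Multiset.filter_cons_of_neg _ (by omega)

theorem atLeast_cons_of_le {s u : ℕ} (h : s ≤ u) (B : Bunch) :
    AtLeast s (u ::ₘ B) = u ::ₘ AtLeast s B :=
  Multiset.filter_cons_of_pos _ h

theorem atLeast_erase_of_lt {s u : ℕ} (h : u < s) (B : Bunch) :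
    AtLeast s (B.erase u) = AtLeast s B := by
  by_cases hu : u ∈ B
  · conv_rhs => rw [← Multiset.cons_erase hu, atLeast_cons_of_lt h]
  · rw [Multiset.erase_of_notMem hu]

theorem atLeast_erase_of_le {s u : ℕ} (h : s ≤ u) {B : Bunch} (hu : u ∈ B) :
    AtLeast s (B.erase u) = (AtLeast s B).erase u := by
  conv_rhs => rw [← Multiset.cons_erase hu, atLeast_cons_of_le h, Multiset.erase_cons_head]

theorem atLeast_atLeast {s t : ℕ} (h : s ≤ t) (B : Bunch) :
    AtLeast t (AtLeast s B) = AtLeast t B := by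
  simp only [AtLeast, Multiset.filter_filter]
  exact Multiset.filter_congr fun x _ => by omega

theorem count_atLeast {s a : ℕ} (h : s ≤ a) (B : Bunch) :
    (AtLeast s B).count a = B.count a := by
  rw [AtLeast, Multiset.count_filter, if_pos h]

theorem atLeast_eq_self {s : ℕ} {B : Bunch} (h : ∀ x ∈ B, s ≤ x) : AtLeast s B = B :=
  Multiset.filter_eq_self.2 h

section Profile

variable {s : ℕ} {G H : Bunch}

theorem atLeast_two_mul_add_replicate (hs : s.isPowerOfTwo)
    (hG : ∀ x ∈ G, x.isPowerOfTwo ∧ s ≤ x) :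
    AtLeast (2 * s) G + Multiset.replicate (G.count s) s = G := by
  rw [← Multiset.filter_eq' G s, AtLeast]
  convert Multiset.filter_add_not (2 * s ≤ ·) G using 2
  have := Nat.pos_of_isPowerOfTwo hs
  refine Multiset.filter_congr fun x hx => ⟨fun h => by omega, fun h => ?_⟩
  exact hs.eq_of_le_of_lt_two_mul (hG x hx).1 (hG x hx).2 (by omega)

theorem eq_of_atLeast_two_mul_eq_of_count_eq (hs : s.isPowerOfTwo)
    (hG : ∀ x ∈ G, x.isPowerOfTwo ∧ s ≤ x) (hH : ∀ x ∈ H, x.isPowerOfTwo ∧ s ≤ x)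
    (h : AtLeast (2 * s) G = AtLeast (2 * s) H) (hc : G.count s = H.count s) : G = H := by
  rw [← atLeast_two_mul_add_replicate hs hG, ← atLeast_two_mul_add_replicate hs hH, h, hc]

theorem vol_add_le_of_count_lt (hs : s.isPowerOfTwo)
    (hG : ∀ x ∈ G, x.isPowerOfTwo ∧ s ≤ x) (hH : ∀ x ∈ H, x.isPowerOfTwo ∧ s ≤ x)
    (h : AtLeast (2 * s) G = AtLeast (2 * s) H) (hc : G.count s < H.count s) :
    vol G + s ≤ vol H := by
  rw [← atLeast_two_mul_add_replicate hs hG, ← atLeast_two_mul_add_replicate hs hH, h,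
    vol_add, vol_add, vol_replicate, vol_replicate]
  nlinarith

end Profile

section Config

variable {κ : ℕ}

theorem mem_sum_of_mem {x : ℕ} {B : Bunch} {C : Config} (hx : x ∈ B) (hB : B ∈ C) :
    x ∈ C.sum :=
  Multiset.mem_of_le (Multiset.le_sum_of_mem hB) hx

theorem forall_mem_of_mem_map_atLeast {P : ℕ → Prop} {s : ℕ} {C : Config}
    (hC : ∀ x ∈ C.sum, P x) {G : Bunch} (hG : G ∈ C.map (AtLeast s)) :
    ∀ x ∈ G, P x ∧ s ≤ x := by
  obtain ⟨B, hB, rfl⟩ := Multiset.mem_map.1 hG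
  intro x hx
  obtain ⟨hxB, hsx⟩ := Multiset.mem_filter.1 hx
  exact ⟨hC x (mem_sum_of_mem hxB hB), hsx⟩

theorem count_sum_map_atLeast (s : ℕ) (C : Config) :
    (C.map (AtLeast s)).sum.count s = C.sum.count s := by
  rw [Multiset.count_sum, ← Multiset.map_id C, Multiset.count_sum, Multiset.map_id]
  simp only [count_atLeast le_rfl, id]

theorem legal_cons {A : Bunch} {C : Config} : Legal κ (A ::ₘ C) ↔ vol A ≤ κ ∧ Legal κ C :=
  Multiset.forall_mem_cons

theorem slackSum_cons (A : Bunch) (C : Config) :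
    slackSum κ (A ::ₘ C) = (κ - vol A) + slackSum κ C := by
  simp [slackSum]

theorem dvd_sub_vol (hκ : κ.isPowerOfTwo) {w : ℕ} (hw : w.isPowerOfTwo) (hwκ : w ≤ κ)
    {B : Bunch} (hB : ∀ x ∈ B, x.isPowerOfTwo ∧ w ≤ x) : w ∣ κ - vol B :=
  Nat.dvd_sub (hw.dvd_of_le hκ hwκ)
    (Multiset.dvd_sum fun x hx => hw.dvd_of_le (hB x hx).1 (hB x hx).2)

/-- `κ` and the volume of the items of size at least `u` are multiples of `u`. -/
theorem vol_atLeast_add_le (hκ : κ.isPowerOfTwo) {u : ℕ} (hu : u.isPowerOfTwo) (huκ : u ≤ κ)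
    {A : Bunch} (hA : ∀ x ∈ A, x.isPowerOfTwo) (hvol : vol A < κ) :
    vol (AtLeast u A) + u ≤ κ := by
  have hdvd := dvd_sub_vol hκ hu huκ (B := AtLeast u A) fun x hx =>
    ⟨hA x (Multiset.mem_of_mem_filter hx), Multiset.of_mem_filter hx⟩
  have hle := vol_atLeast_le u A
  have := Nat.le_of_dvd (by omega) hdvd
  omega

end Config

section Moves

variable {κ s u : ℕ} {C C' : Config}

theorem AdjacentVia.legal (h : AdjacentVia κ u C C') (hC : Legal κ C) : Legal κ C' := by
  obtain ⟨rest, Bd, Br, hu, hroom, rfl, rfl⟩ := h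
  simp only [legal_cons] at hC ⊢
  exact ⟨(vol_mono (Multiset.erase_le u Bd)).trans hC.1, by rw [vol_cons]; omega, hC.2.2⟩

theorem AdjacentVia.sum_eq (h : AdjacentVia κ u C C') : C'.sum = C.sum := by
  obtain ⟨rest, Bd, Br, hu, -, rfl, rfl⟩ := h
  simp only [Multiset.sum_cons]
  conv_rhs => rw [← Multiset.cons_erase hu]
  rw [Multiset.cons_add, Multiset.add_cons, Multiset.cons_add]

theorem AdjacentVia.slackSum_eq (h : AdjacentVia κ u C C') (hC : Legal κ C) :
    slackSum κ C' = slackSum κ C := by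
  obtain ⟨rest, Bd, Br, hu, hroom, rfl, rfl⟩ := h
  have hBd := (legal_cons.1 hC).1
  have := vol_erase_add hu
  simp only [slackSum_cons, vol_cons]
  omega

theorem AdjacentVia.step (h : AdjacentVia κ u C C') (hC : Legal κ C) : Step κ C C' :=
  ⟨hC, h.legal hC, u, h⟩

theorem Step.sum_eq (h : Step κ C C') : C'.sum = C.sum :=
  h.2.2.choose_spec.sum_eq

theorem Step.slackSum_eq (h : Step κ C C') : slackSum κ C' = slackSum κ C :=
  h.2.2.choose_spec.slackSum_eq h.1

theorem Reconfigurable.legal (h : Reconfigurable κ C C') (hC : Legal κ C) : Legal κ C' := by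
  induction h with
  | refl => exact hC
  | tail _ hs _ => exact hs.2.1

theorem Reconfigurable.sum_eq (h : Reconfigurable κ C C') : C'.sum = C.sum := by
  induction h with
  | refl => rfl
  | tail _ hs ih => rw [hs.sum_eq, ih]

theorem Reconfigurable.slackSum_eq (h : Reconfigurable κ C C') :
    slackSum κ C' = slackSum κ C := by
  induction h with
  | refl => rfl
  | tail _ hs ih => rw [hs.slackSum_eq, ih]

def StepBelow (κ s : ℕ) (C C' : Config) : Prop :=
  Legal κ C ∧ ∃ u < s, AdjacentVia κ u C C'

def ReachBelow (κ s : ℕ) : Config → Config → Prop :=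
  Relation.ReflTransGen (StepBelow κ s)

theorem ReachBelow.reconfigurable (h : ReachBelow κ s C C') : Reconfigurable κ C C' :=
  Relation.ReflTransGen.mono (fun _ _ ⟨hC, _, _, hadj⟩ => hadj.step hC) _ _ h

theorem ReachBelow.mono {t : ℕ} (hst : s ≤ t) (h : ReachBelow κ s C C') : ReachBelow κ t C C' :=
  Relation.ReflTransGen.mono (fun _ _ ⟨hC, u, hu, hadj⟩ => ⟨hC, u, by omega, hadj⟩) _ _ h

theorem ReachBelow.cons {A : Bunch} (hA : vol A ≤ κ) (h : ReachBelow κ s C C') :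
    ReachBelow κ s (A ::ₘ C) (A ::ₘ C') := by
  induction h with
  | refl => exact .refl
  | tail _ hs ih =>
    obtain ⟨hC, u, hu, rest, Bd, Br, hBd, hroom, rfl, rfl⟩ := hs
    refine ih.tail ⟨legal_cons.2 ⟨hA, hC⟩, u, hu, A ::ₘ rest, Bd, Br, hBd, hroom, ?_, ?_⟩ <;>
      simp only [Multiset.cons_swap A]

theorem StepBelow.map_atLeast_eq (h : StepBelow κ s C C') :
    C'.map (AtLeast s) = C.map (AtLeast s) := by
  obtain ⟨-, u, hu, rest, Bd, Br, hBd, -, rfl, rfl⟩ := h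
  simp only [Multiset.map_cons, atLeast_erase_of_lt hu, atLeast_cons_of_lt hu]

theorem ReachBelow.map_atLeast_eq (h : ReachBelow κ s C C') :
    C'.map (AtLeast s) = C.map (AtLeast s) := by
  induction h with
  | refl => rfl
  | tail _ hs ih => rw [hs.map_atLeast_eq, ih]

/-- No bunch can receive an item larger than the total slack. -/
theorem Step.stepBelow_of_slackSum_lt (h : Step κ C C') (hlt : slackSum κ C < s) :
    StepBelow κ s C C' := by
  obtain ⟨hC, -, u, hadj⟩ := h
  refine ⟨hC, u, ?_, hadj⟩
  obtain ⟨rest, Bd, Br, -, hroom, rfl, -⟩ := hadj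
  rw [slackSum_cons, slackSum_cons] at hlt
  omega

theorem Reconfigurable.reachBelow_of_slackSum_lt (h : Reconfigurable κ C C')
    (hlt : slackSum κ C < s) : ReachBelow κ s C C' := by
  induction h with
  | refl => exact .refl
  | tail hreach hs ih =>
    exact ih.tail (hs.stepBelow_of_slackSum_lt (Reconfigurable.slackSum_eq hreach ▸ hlt))

end Moves

section Room

variable {κ u : ℕ}

def CanMakeRoom (κ w : ℕ) : Prop :=
  ∀ F : Config, Legal κ F → (∀ x ∈ F.sum, x.isPowerOfTwo) → w ≤ slackSum κ F →
    ∃ (C : Bunch) (F' : Config), ReachBelow κ w F (C ::ₘ F') ∧ vol C + w ≤ κ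

/-- The smallest item `w` of `A` is smaller than `u`, and the slack that `u` needs beyond that of
`A` is a multiple of `w`, so the other bunches can make room for `w`. -/
theorem exists_reachBelow_erase (hκ : κ.isPowerOfTwo) (hu : u.isPowerOfTwo)
    (hsmall : ∀ w < u, w.isPowerOfTwo → w ≤ κ → CanMakeRoom κ w)
    {A : Bunch} {F : Config} (hleg : Legal κ (A ::ₘ F))
    (hpow : ∀ x ∈ (A ::ₘ F).sum, x.isPowerOfTwo) (hslack : u ≤ slackSum κ (A ::ₘ F))
    (hroom : vol (AtLeast u A) + u ≤ κ) (hfull : κ < vol A + u) :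
    ∃ w ∈ A, w < u ∧ ∃ F', ReachBelow κ u (A ::ₘ F) (A.erase w ::ₘ F') := by
  rw [Multiset.sum_cons] at hpow
  have hpowA : ∀ x ∈ A, x.isPowerOfTwo := fun x hx => hpow x (Multiset.mem_add.2 (.inl hx))
  have hpowF : ∀ x ∈ F.sum, x.isPowerOfTwo := fun x hx => hpow x (Multiset.mem_add.2 (.inr hx))
  obtain ⟨hA, hF⟩ := legal_cons.1 hleg
  have hA0 : A.toFinset.Nonempty := by
    rw [Multiset.toFinset_nonempty]
    rintro rfl
    simp [AtLeast, vol] at hroom hfull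
    omega
  obtain ⟨w, hwA, hwmin⟩ := A.toFinset.exists_min_image id hA0
  rw [Multiset.mem_toFinset] at hwA
  replace hwmin : ∀ x ∈ A, w ≤ x := fun x hx => hwmin x (Multiset.mem_toFinset.2 hx)
  have hwu : w < u := by
    by_contra! h
    rw [atLeast_eq_self fun x hx => h.trans (hwmin x hx)] at hroom
    omega
  have hwκ : w ≤ κ := (le_vol_of_mem hwA).trans hA
  have hdvd : w ∣ u - (κ - vol A) :=
    Nat.dvd_sub ((hpowA w hwA).dvd_of_le hu hwu.le)
      (dvd_sub_vol hκ (hpowA w hwA) hwκ fun x hx => ⟨hpowA x hx, hwmin x hx⟩)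
  have hwF : w ≤ slackSum κ F := by
    have := Nat.le_of_dvd (by omega) hdvd
    rw [slackSum_cons] at hslack
    omega
  obtain ⟨C, F', hreach, hC⟩ := hsmall w hwu (hpowA w hwA) hwκ F hF hpowF hwF
  have hreach' : ReachBelow κ u (A ::ₘ F) (A ::ₘ C ::ₘ F') := (hreach.cons hA).mono hwu.le
  refine ⟨w, hwA, hwu, (w ::ₘ C) ::ₘ F', hreach'.tail ⟨?_, w, hwu, F', A, C, hwA, hC, rfl, rfl⟩⟩
  exact hreach'.reconfigurable.legal hleg

theorem exists_reachBelow_room_head (hκ : κ.isPowerOfTwo) (hu : u.isPowerOfTwo)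
    (hsmall : ∀ w < u, w.isPowerOfTwo → w ≤ κ → CanMakeRoom κ w)
    {A : Bunch} {F : Config} (hleg : Legal κ (A ::ₘ F))
    (hpow : ∀ x ∈ (A ::ₘ F).sum, x.isPowerOfTwo) (hslack : u ≤ slackSum κ (A ::ₘ F))
    (hroom : vol (AtLeast u A) + u ≤ κ) :
    ∃ (A' : Bunch) (F' : Config), ReachBelow κ u (A ::ₘ F) (A' ::ₘ F') ∧
      AtLeast u A' = AtLeast u A ∧ vol A' + u ≤ κ := by
  by_cases hfull : vol A + u ≤ κ
  · exact ⟨A, F, .refl, rfl, hfull⟩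
  obtain ⟨w, hwA, hwu, F1, hreach⟩ :=
    exists_reachBelow_erase hκ hu hsmall hleg hpow hslack hroom (by omega)
  have hAt : AtLeast u (A.erase w) = AtLeast u A := atLeast_erase_of_lt hwu A
  have hrec := hreach.reconfigurable
  have hw0 := Nat.pos_of_isPowerOfTwo (hpow w (mem_sum_of_mem hwA (Multiset.mem_cons_self _ _)))
  have := vol_erase_add hwA
  obtain ⟨A', F', hreach', hAt', hA'⟩ := exists_reachBelow_room_head hκ hu hsmall
    (hrec.legal hleg) (hrec.sum_eq ▸ hpow) (hrec.slackSum_eq ▸ hslack) (hAt ▸ hroom)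
  exact ⟨A', F', hreach.trans hreach', hAt'.trans hAt, hA'⟩
termination_by vol A
decreasing_by omega

theorem canMakeRoom_of_isPowerOfTwo (hκ : κ.isPowerOfTwo) (hu : u.isPowerOfTwo) (huκ : u ≤ κ) :
    CanMakeRoom κ u := by
  induction u using Nat.strong_induction_on with
  | _ u IH =>
  intro F hF hpow hslack
  induction F using Multiset.induction_on with
  | empty => simp [slackSum] at hslack; exact absurd hslack (Nat.pos_of_isPowerOfTwo hu).ne'
  | cons A F ih =>
    obtain ⟨hA, hFleg⟩ := legal_cons.1 hF
    rw [Multiset.sum_cons] at hpow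
    by_cases hFslack : u ≤ slackSum κ F
    · obtain ⟨C, F', hreach, hC⟩ :=
        ih hFleg (fun x hx => hpow x (Multiset.mem_add.2 (.inr hx))) hFslack
      refine ⟨C, A ::ₘ F', ?_, hC⟩
      rw [Multiset.cons_swap C]
      exact hreach.cons hA
    · have hroom : vol (AtLeast u A) + u ≤ κ := by
        rw [slackSum_cons] at hslack
        exact vol_atLeast_add_le hκ hu huκ (fun x hx => hpow x (Multiset.mem_add.2 (.inl hx)))
          (by omega)
      obtain ⟨A', F', hreach, -, hA'⟩ :=
        exists_reachBelow_room_head hκ hu IH hF (by rwa [Multiset.sum_cons]) hslack hroom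
      exact ⟨A', F', hreach, hA'⟩

end Room

section Transfer

variable {κ s : ℕ}

/-- The receiving bunch is first cleared of items smaller than `s`. -/
theorem exists_reconfigurable_transfer (hκ : κ.isPowerOfTwo) (hs : s.isPowerOfTwo)
    {X : Config} (hX : Legal κ X) (hpow : ∀ x ∈ X.sum, x.isPowerOfTwo)
    (hslack : s ≤ slackSum κ X) {G H : Bunch} {M : Multiset Bunch}
    (hmap : X.map (AtLeast s) = G ::ₘ H ::ₘ M) (hsG : s ∈ G) (hH : vol H + s ≤ κ) :
    ∃ X', Reconfigurable κ X X' ∧ X'.map (AtLeast s) = G.erase s ::ₘ (s ::ₘ H) ::ₘ M := by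
  obtain ⟨Ad, Ar, Y, rfl, rfl, rfl, rfl⟩ := Multiset.exists_eq_cons_cons_of_map_eq hmap
  rw [Multiset.cons_swap] at hX hpow hslack
  obtain ⟨Ar', F, hreach, hAr', hroom⟩ := exists_reachBelow_room_head hκ hs
    (fun w _ hw hwκ => canMakeRoom_of_isPowerOfTwo hκ hw hwκ) hX hpow hslack hH
  have hmapF : F.map (AtLeast s) = AtLeast s Ad ::ₘ Y.map (AtLeast s) := by
    have := hreach.map_atLeast_eq
    simp only [Multiset.map_cons, hAr', Multiset.cons_inj_right] at this
    exact this
  obtain ⟨Ad', hAd'F, hAd', hY'⟩ := (Multiset.map_eq_cons _ F _ _).2 hmapF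
  have hsAd' : s ∈ Ad' := Multiset.mem_of_mem_filter (hAd' ▸ hsG)
  have hF : Ar' ::ₘ F = Ad' ::ₘ Ar' ::ₘ F.erase Ad' := by
    rw [Multiset.cons_swap, Multiset.cons_erase hAd'F]
  have hreach' : Reconfigurable κ (Ad ::ₘ Ar ::ₘ Y) (Ad' ::ₘ Ar' ::ₘ F.erase Ad') := by
    rw [Multiset.cons_swap, ← hF]
    exact hreach.reconfigurable
  refine ⟨Ad'.erase s ::ₘ (s ::ₘ Ar') ::ₘ F.erase Ad', hreach'.tail ?_, ?_⟩
  · refine AdjacentVia.step ⟨F.erase Ad', Ad', Ar', hsAd', hroom, rfl, rfl⟩ (hreach'.legal ?_)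
    rwa [Multiset.cons_swap]
  · simp only [Multiset.map_cons, atLeast_erase_of_le le_rfl hsAd', atLeast_cons_of_le le_rfl,
      hAd', hAr', hY']

end Transfer

section Matching

variable {κ s : ℕ}

def IsProfileMatching (s : ℕ) (X CT : Config) (Z : Multiset (Bunch × Bunch)) : Prop :=
  Z.map Prod.fst = X.map (AtLeast s) ∧ Z.map Prod.snd = CT.map (AtLeast s) ∧
    ∀ p ∈ Z, AtLeast (2 * s) p.1 = AtLeast (2 * s) p.2

def mismatch (s : ℕ) (Z : Multiset (Bunch × Bunch)) : ℕ :=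
  (Z.map fun p => Nat.dist (p.1.count s) (p.2.count s)).sum

theorem exists_isProfileMatching {X CT : Config}
    (h : X.map (AtLeast (2 * s)) = CT.map (AtLeast (2 * s))) :
    ∃ Z, IsProfileMatching s X CT Z := by
  have hrel : Multiset.Rel (fun G H => AtLeast (2 * s) G = AtLeast (2 * s) H)
      (X.map (AtLeast s)) (CT.map (AtLeast s)) := by
    rw [Multiset.rel_map]
    simp only [atLeast_atLeast (show s ≤ 2 * s by omega)]
    rwa [← Multiset.rel_map (p := Eq), Multiset.rel_eq]
  exact hrel.exists_map_fst_map_snd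

theorem IsProfileMatching.sum_count_eq {X CT : Config} {Z : Multiset (Bunch × Bunch)}
    (hZ : IsProfileMatching s X CT Z) (hsum : X.sum = CT.sum) :
    (Z.map fun p => p.1.count s).sum = (Z.map fun p => p.2.count s).sum := by
  rw [← Multiset.count_sum (f := Prod.fst), ← Multiset.count_sum (f := Prod.snd), hZ.1, hZ.2.1,
    count_sum_map_atLeast,
    count_sum_map_atLeast, hsum]

theorem map_atLeast_eq_of_mismatch_eq_zero (hs : s.isPowerOfTwo) {X CT : Config}
    {Z : Multiset (Bunch × Bunch)} (hpowX : ∀ x ∈ X.sum, x.isPowerOfTwo)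
    (hpowT : ∀ x ∈ CT.sum, x.isPowerOfTwo) (hZ : IsProfileMatching s X CT Z)
    (h0 : mismatch s Z = 0) : X.map (AtLeast s) = CT.map (AtLeast s) := by
  rw [← hZ.1, ← hZ.2.1]
  refine Multiset.map_congr rfl fun p hp => eq_of_atLeast_two_mul_eq_of_count_eq hs
    (forall_mem_of_mem_map_atLeast hpowX (hZ.1 ▸ Multiset.mem_map_of_mem _ hp))
    (forall_mem_of_mem_map_atLeast hpowT (hZ.2.1 ▸ Multiset.mem_map_of_mem _ hp)) (hZ.2.2 p hp) ?_
  exact Nat.eq_of_dist_eq_zero (Multiset.sum_eq_zero_iff.1 h0 _ (Multiset.mem_map_of_mem _ hp))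

theorem IsProfileMatching.transfer (hs : 0 < s) {X X' CT : Config} {pd pr : Bunch × Bunch}
    {rest : Multiset (Bunch × Bunch)} (hZ : IsProfileMatching s X CT (pd ::ₘ pr ::ₘ rest))
    (hX' : X'.map (AtLeast s) = pd.1.erase s ::ₘ (s ::ₘ pr.1) ::ₘ rest.map Prod.fst) :
    IsProfileMatching s X' CT ((pd.1.erase s, pd.2) ::ₘ (s ::ₘ pr.1, pr.2) ::ₘ rest) := by
  obtain ⟨-, h2, h3⟩ := hZ
  simp only [Multiset.forall_mem_cons] at h3
  refine ⟨by simpa using hX'.symm, by simpa using h2, ?_⟩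
  simp only [Multiset.forall_mem_cons, atLeast_erase_of_lt (show s < 2 * s by omega),
    atLeast_cons_of_lt (show s < 2 * s by omega)]
  exact h3

theorem exists_reconfigurable_mismatch_lt (hκ : κ.isPowerOfTwo) (hs : s.isPowerOfTwo)
    {X CT : Config} {Z : Multiset (Bunch × Bunch)} (hX : Legal κ X) (hT : Legal κ CT)
    (hpow : ∀ x ∈ CT.sum, x.isPowerOfTwo) (hsum : X.sum = CT.sum) (hslack : s ≤ slackSum κ X)
    (hZ : IsProfileMatching s X CT Z) (hZ0 : mismatch s Z ≠ 0) :
    ∃ X' Z', Reconfigurable κ X X' ∧ IsProfileMatching s X' CT Z' ∧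
      mismatch s Z' < mismatch s Z := by
  have hne : ∃ p ∈ Z, p.1.count s ≠ p.2.count s := by
    by_contra! h
    refine hZ0 (Multiset.sum_eq_zero fun d hd => ?_)
    obtain ⟨p, hp, rfl⟩ := Multiset.mem_map.1 hd
    simp [h p hp]
  obtain ⟨pd, pr, rest, rfl, hd, hr⟩ :=
    Multiset.exists_cons_cons_of_sum_map_eq (hZ.sum_count_eq hsum) hne
  have hpowX : ∀ x ∈ X.sum, x.isPowerOfTwo := hsum ▸ hpow
  have hmem1 : pr.1 ∈ X.map (AtLeast s) := hZ.1 ▸ by simp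
  have hmem2 : pr.2 ∈ CT.map (AtLeast s) := hZ.2.1 ▸ by simp
  obtain ⟨W, hW, hWpr⟩ := Multiset.mem_map.1 hmem2
  have hroom : vol pr.1 + s ≤ κ := calc
    vol pr.1 + s ≤ vol pr.2 := vol_add_le_of_count_lt hs (forall_mem_of_mem_map_atLeast hpowX hmem1)
      (forall_mem_of_mem_map_atLeast hpow hmem2) (hZ.2.2 pr (by simp)) hr
    _ ≤ vol W := hWpr ▸ vol_atLeast_le s W
    _ ≤ κ := hT W hW
  have hmapX : X.map (AtLeast s) = pd.1 ::ₘ pr.1 ::ₘ rest.map Prod.fst := by rw [← hZ.1]; simp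
  obtain ⟨X', hXX', hX'⟩ := exists_reconfigurable_transfer hκ hs hX hpowX hslack hmapX
    (Multiset.count_pos.1 (by omega)) hroom
  refine ⟨X', _, hXX', hZ.transfer (Nat.pos_of_isPowerOfTwo hs) hX', ?_⟩
  simp only [mismatch, Multiset.map_cons, Multiset.sum_cons, Multiset.count_erase_self,
    Multiset.count_cons_self, Nat.dist]
  omega

theorem exists_reconfigurable_map_atLeast_eq_of_isProfileMatching (hκ : κ.isPowerOfTwo)
    (hs : s.isPowerOfTwo) {X CT : Config} {Z : Multiset (Bunch × Bunch)} (hX : Legal κ X) (hT : Legal κ CT)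
    (hpow : ∀ x ∈ CT.sum, x.isPowerOfTwo) (hsum : X.sum = CT.sum) (hslack : s ≤ slackSum κ X)
    (hZ : IsProfileMatching s X CT Z) :
    ∃ X', Reconfigurable κ X X' ∧ X'.map (AtLeast s) = CT.map (AtLeast s) := by
  by_cases h0 : mismatch s Z = 0
  · exact ⟨X, .refl, map_atLeast_eq_of_mismatch_eq_zero hs (hsum ▸ hpow) hpow hZ h0⟩
  obtain ⟨X', Z', hXX', hZ', hlt⟩ :=
    exists_reconfigurable_mismatch_lt hκ hs hX hT hpow hsum hslack hZ h0
  obtain ⟨X'', hX'X'', hmap⟩ := exists_reconfigurable_map_atLeast_eq_of_isProfileMatching hκ hs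
    (hXX'.legal hX) hT hpow (hXX'.sum_eq.trans hsum) (hXX'.slackSum_eq ▸ hslack) hZ'
  exact ⟨X'', hXX'.trans hX'X'', hmap⟩
termination_by mismatch s Z

theorem exists_reconfigurable_map_atLeast_eq (hκ : κ.isPowerOfTwo) (hs : s.isPowerOfTwo)
    {X CT : Config} (hX : Legal κ X) (hT : Legal κ CT) (hpow : ∀ x ∈ CT.sum, x.isPowerOfTwo)
    (hsum : X.sum = CT.sum) (hslack : s ≤ slackSum κ X)
    (hmap : X.map (AtLeast (2 * s)) = CT.map (AtLeast (2 * s))) :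
    ∃ X', Reconfigurable κ X X' ∧ X'.map (AtLeast s) = CT.map (AtLeast s) :=
  have ⟨_, hZ⟩ := exists_isProfileMatching hmap
  exists_reconfigurable_map_atLeast_eq_of_isProfileMatching hκ hs hX hT hpow hsum hslack hZ

end Matching

theorem reconfigurable_of_map_atLeast_eq {κ : ℕ} (hκ : κ.isPowerOfTwo) {CT : Config}
    (hT : Legal κ CT) (hpow : ∀ x ∈ CT.sum, x.isPowerOfTwo) (j : ℕ) {X : Config}
    (hX : Legal κ X) (hsum : X.sum = CT.sum) (hslack : 2 ^ j ≤ slackSum κ X)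
    (hmap : X.map (AtLeast (2 * 2 ^ j)) = CT.map (AtLeast (2 * 2 ^ j))) :
    Reconfigurable κ X CT := by
  induction j generalizing X with
  | zero =>
    obtain ⟨X', hXX', hmap'⟩ :=
      exists_reconfigurable_map_atLeast_eq hκ ⟨0, rfl⟩ hX hT hpow hsum hslack hmap
    have hid : ∀ {Y : Config}, Y.sum = CT.sum → Y.map (AtLeast 1) = Y := fun {Y} hY => by
      conv_rhs => rw [← Multiset.map_id Y]
      exact Multiset.map_congr rfl fun B hB => atLeast_eq_self fun x hx =>
        Nat.pos_of_isPowerOfTwo (hpow x (hY ▸ mem_sum_of_mem hx hB))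
    rw [pow_zero, hid (hXX'.sum_eq.trans hsum), hid rfl] at hmap'
    exact hmap' ▸ hXX'
  | succ j ih =>
    obtain ⟨X', hXX', hmap'⟩ :=
      exists_reconfigurable_map_atLeast_eq hκ ⟨j + 1, rfl⟩ hX hT hpow hsum hslack hmap
    refine hXX'.trans (ih (hXX'.legal hX) (hXX'.sum_eq.trans hsum) ?_ (by rwa [← pow_succ']))
    rw [hXX'.slackSum_eq]
    rw [pow_succ] at hslack
    omega

theorem map_atLeast_bunchesWith (s : ℕ) (X : Config) :
    (BunchesWith s X).map (AtLeast s) = (X.map (AtLeast s)).filter (· ≠ 0) := by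
  rw [Multiset.filter_map, BunchesWith]
  congr 1
  refine Multiset.filter_congr fun B _ => ?_
  simp [AtLeast, Multiset.filter_eq_nil]

theorem settled_iff (s : ℕ) (D CT : Config) :
    Settled s D CT ↔ (D.map (AtLeast s)).filter (· ≠ 0) = (CT.map (AtLeast s)).filter (· ≠ 0) := by
  rw [← map_atLeast_bunchesWith, ← map_atLeast_bunchesWith, ← Multiset.rel_eq, Multiset.rel_map]
  rfl

theorem settled_of_map_atLeast_eq {s : ℕ} {D CT : Config}
    (h : D.map (AtLeast s) = CT.map (AtLeast s)) : Settled s D CT :=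
  (settled_iff s D CT).2 (by rw [h])

theorem map_atLeast_eq_of_settled {s : ℕ} {D CT : Config}
    (hcard : Multiset.card D = Multiset.card CT) (h : Settled s D CT) :
    D.map (AtLeast s) = CT.map (AtLeast s) :=
  Multiset.eq_of_card_eq_of_filter_ne_eq (by simp [hcard]) ((settled_iff s D CT).1 h)

/-- The smallest item size `t ≥ s` is settled, and below `t` there is nothing to compare. -/
theorem map_atLeast_eq_of_forall_settled {s : ℕ} {CS CT : Config}
    (hcard : Multiset.card CS = Multiset.card CT) (hU : CS.sum = CT.sum)
    (h : ∀ x ∈ CS.sum, s ≤ x → Settled x CS CT) : CS.map (AtLeast s) = CT.map (AtLeast s) := by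
  by_cases hex : ∃ t, t ∈ CS.sum ∧ s ≤ t
  · have ht := Nat.find_spec hex
    have hcongr : ∀ {C : Config}, C.sum = CS.sum →
        C.map (AtLeast s) = C.map (AtLeast (Nat.find hex)) := fun {C} hC =>
      Multiset.map_congr rfl fun B hB => Multiset.filter_congr fun x hx =>
        ⟨fun hsx => Nat.find_min' hex ⟨hC ▸ mem_sum_of_mem hx hB, hsx⟩, ht.2.trans⟩
    rw [hcongr rfl, hcongr hU.symm]
    exact map_atLeast_eq_of_settled hcard (h _ ht.1 ht.2)
  · push Not at hex
    have hzero : ∀ {C : Config}, C.sum = CS.sum →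
        C.map (AtLeast s) = Multiset.replicate (Multiset.card C) 0 := fun {C} hC =>
      Multiset.eq_replicate.2 ⟨Multiset.card_map _ _, fun G hG => by
        obtain ⟨B, hB, rfl⟩ := Multiset.mem_map.1 hG
        exact Multiset.filter_eq_nil.2 fun x hx => (hex x (hC ▸ mem_sum_of_mem hx hB)).not_ge⟩
    rw [hzero rfl, hzero hU.symm, hcard]

theorem stmt6 (κ : ℕ) (hκ : ∃ k, κ = 2 ^ k) (CS CT : Config)
    (hS : Legal κ CS) (hT : Legal κ CT)
    (hcard : Multiset.card CS = Multiset.card CT) (hU : CS.sum = CT.sum)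
    (hpow : ∀ x ∈ CS.sum, ∃ j, x = 2 ^ j)
    (ℓ : ℕ) (hℓmem : ℓ ∈ CS.sum) (hℓns : ¬ Settled ℓ CS CT)
    (hℓmax : ∀ s ∈ CS.sum, ¬ Settled s CS CT → s ≤ ℓ) :
    Reconfigurable κ CS CT ↔ ℓ ≤ slackSum κ CS := by
  constructor
  · intro h
    by_contra! hlt
    exact hℓns (settled_of_map_atLeast_eq (h.reachBelow_of_slackSum_lt hlt).map_atLeast_eq.symm)
  · intro hle
    obtain ⟨m, rfl⟩ := hpow ℓ hℓmem
    refine reconfigurable_of_map_atLeast_eq hκ hT (hU ▸ hpow) m hS hU hle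
      (map_atLeast_eq_of_forall_settled hcard hU fun x hx h2x => ?_)
    by_contra hns
    have := hℓmax x hx hns
    have := Nat.two_pow_pos m
    omega
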